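/- arXiv:1908.01402 — 8 statements merged into one kernel-verified Lean document; each statement's English description precedes it below -/
import Mathlib

section
/- Let h : ℝ^n → ℝ be differentiable and convex, and f : ℝ^n → ℝ be differentiable with L ≥ 0. If L·h − f is convex, then for all x, y ∈ ℝ^n, f(y) ≤ f(x) + ⟨∇f(x), y − x⟩ + L·(h(y) − h(x) − ⟨∇h(x), y − x⟩). -/
open scoped RealInnerProductSpace

lemma inner_gradient_eq_fderiv {n : ℕ} (f : EuclideanSpace ℝ (Fin n) → ℝ)
    (x v : EuclideanSpace ℝ (Fin n)) : ⟪gradient f x, v⟫ = fderiv ℝ f x v := by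
  simp [gradient, InnerProductSpace.toDual_symm_apply]

lemma convex_first_order {n : ℕ} (g : EuclideanSpace ℝ (Fin n) → ℝ)
    (hg : Differentiable ℝ g) (hc : ConvexOn ℝ Set.univ g)
    (x y : EuclideanSpace ℝ (Fin n)) : g x + fderiv ℝ g x (y - x) ≤ g y := by
  set φ : ℝ → ℝ := fun t => g (x + t • (y - x)) with hφ
  have hline : ∀ t : ℝ, HasDerivAt (fun s : ℝ => x + s • (y - x)) (y - x) t := by
    intro t
    simpa using ((hasDerivAt_id t).smul_const (y - x)).const_add x
  have hder : HasDerivAt φ (fderiv ℝ g x (y - x)) 0 := by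
    have := (hg (x + (0:ℝ) • (y - x))).hasFDerivAt.comp_hasDerivAt 0 (hline 0)
    simp only [zero_smul, add_zero] at this
    exact this
  have hφconv : ConvexOn ℝ Set.univ φ := by
    have hcomp := hc.comp_affineMap (AffineMap.lineMap x y : ℝ →ᵃ[ℝ] EuclideanSpace ℝ (Fin n))
    have heq : φ = g ∘ (AffineMap.lineMap x y : ℝ →ᵃ[ℝ] EuclideanSpace ℝ (Fin n)) := by
      funext t
      simp only [φ, Function.comp_apply, AffineMap.lineMap_apply]
      congr 1
      rw [smul_sub]
      simp only [vsub_eq_sub, vadd_eq_add, smul_sub]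
      abel
    rw [heq]
    simpa using hcomp
  have hslope := hφconv.le_slope_of_hasDerivAt (Set.mem_univ (0:ℝ)) (Set.mem_univ (1:ℝ))
    one_pos hder
  have : fderiv ℝ g x (y - x) ≤ φ 1 - φ 0 := by
    simpa [slope, φ] using hslope
  have hφ0 : φ 0 = g x := by simp [φ]
  have hφ1 : φ 1 = g y := by simp [φ]
  rw [hφ0, hφ1] at this
  linarith

theorem stmt_0 {n : ℕ} (h f : EuclideanSpace ℝ (Fin n) → ℝ) (L : ℝ) (hL : 0 ≤ L)
    (hh : Differentiable ℝ h) (hhconv : ConvexOn ℝ Set.univ h)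
    (hf : Differentiable ℝ f)
    (hrel : ConvexOn ℝ Set.univ (fun x => L * h x - f x)) :
    ∀ x y : EuclideanSpace ℝ (Fin n),
      f y ≤ f x + ⟪gradient f x, y - x⟫ +
        L * (h y - h x - ⟪gradient h x, y - x⟫) := by
  intro x y
  set g : EuclideanSpace ℝ (Fin n) → ℝ := fun x => L * h x - f x with hg
  have hgdiff : Differentiable ℝ g := (hh.const_mul L).sub hf
  have hkey := convex_first_order g hgdiff hrel x y
  have hfd : fderiv ℝ g x (y - x) = L * fderiv ℝ h x (y - x) - fderiv ℝ f x (y - x) := by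
    have : fderiv ℝ g x = L • fderiv ℝ h x - fderiv ℝ f x := by
      rw [hg]
      have := fderiv_fun_sub (x := x) ((hh x).const_mul L) (hf x)
      rw [show (fun x => L * h x - f x) = (fun x => L * h x) - f from rfl] at this ⊢
      rw [this, fderiv_const_mul (hh x) L]
    rw [this]; simp
  rw [inner_gradient_eq_fderiv, inner_gradient_eq_fderiv]
  rw [hfd] at hkey
  simp only [g] at hkey
  linarith
end

section
/- Let h : ℝ^n → ℝ be differentiable and f : ℝ^n → ℝ be differentiable with L ≥ 0. If for all x, y ∈ ℝ^n we have f(y) ≤ f(x) + ⟨∇f(x), y − x⟩ + L·D_h(y,x), where D_h(y,x) = h(y) − h(x) − ⟨∇h(x), y − x⟩, then for all x, y ∈ ℝ^n, ⟨∇f(x) − ∇f(y), x − y⟩ ≤ L·⟨∇h(x) − ∇h(y), x − y⟩. -/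
/-!
Apply the descent inequality at `(x, y)` and at `(y, x)` and add: the two first-order
remainders of a function sum to `⟪∇φ x - ∇φ y, x - y⟫`, for `f` on the left and for `h` on
the right.
-/

open scoped RealInnerProductSpace

section

variable {E : Type*} [NormedAddCommGroup E] [InnerProductSpace ℝ E]

theorem linearization_gap_add_swap (φ : E → ℝ) (G : E → E) (x y : E) :
    (φ y - φ x - ⟪G x, y - x⟫) + (φ x - φ y - ⟪G y, x - y⟫) = ⟪G x - G y, x - y⟫ := by
  rw [← neg_sub x y, inner_neg_right, inner_sub_left]
  ring

theorem inner_sub_le_of_linearization_gap_le {f h : E → ℝ} {F H : E → E} (L : ℝ)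
    (hgap : ∀ x y, f y - f x - ⟪F x, y - x⟫ ≤ L * (h y - h x - ⟪H x, y - x⟫)) (x y : E) :
    ⟪F x - F y, x - y⟫ ≤ L * ⟪H x - H y, x - y⟫ := by
  rw [← linearization_gap_add_swap f F, ← linearization_gap_add_swap h H, mul_add]
  exact add_le_add (hgap x y) (hgap y x)

end

theorem stmt_1_general {n : ℕ} (h f : EuclideanSpace ℝ (Fin n) → ℝ) (L : ℝ)
    (hdesc : ∀ x y : EuclideanSpace ℝ (Fin n),
      f y ≤ f x + ⟪gradient f x, y - x⟫ +
        L * (h y - h x - ⟪gradient h x, y - x⟫)) :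
    ∀ x y : EuclideanSpace ℝ (Fin n),
      ⟪gradient f x - gradient f y, x - y⟫ ≤
        L * ⟪gradient h x - gradient h y, x - y⟫ :=
  inner_sub_le_of_linearization_gap_le (f := f) (h := h) L fun x y => by linarith [hdesc x y]

theorem stmt_1 {n : ℕ} (h f : EuclideanSpace ℝ (Fin n) → ℝ) (L : ℝ) (hL : 0 ≤ L)
    (hh : Differentiable ℝ h) (hf : Differentiable ℝ f)
    (hdesc : ∀ x y : EuclideanSpace ℝ (Fin n),
      f y ≤ f x + ⟪gradient f x, y - x⟫ +
        L * (h y - h x - ⟪gradient h x, y - x⟫)) :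
    ∀ x y : EuclideanSpace ℝ (Fin n),
      ⟪gradient f x - gradient f y, x - y⟫ ≤
        L * ⟪gradient h x - gradient h y, x - y⟫ :=
  stmt_1_general h f L hdesc
end

section
/- Let g : ℝ^n → ℝ ∪ {∞} be proper and lower semicontinuous, and let h : ℝ^n → ℝ be continuous, convex, and 1-coercive. If liminf over ‖z‖ → ∞ of g(z)/h(z) is greater than −∞, then there exists r ∈ ℝ such that g + r·h is bounded below on ℝ^n. -/
/-!
Below the liminf pick a real `m`; far out `h > 0` by coercivity, so `m * h ≤ g` there, i.e.
`g - m * h ≥ 0` off a compact set. On that compact set the lower semicontinuous, never-`⊥`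
function `g` attains its minimum and the continuous `h` is bounded, so `g - m * h` is bounded
below everywhere.
-/

open Filter

lemma IsCompact.exists_real_le_of_lowerSemicontinuous {α : Type*} [TopologicalSpace α]
    {g : α → EReal} {K : Set α} (hK : IsCompact K) (hg : LowerSemicontinuous g)
    (hg_nbot : ∀ x, g x ≠ ⊥) : ∃ c : ℝ, ∀ x ∈ K, (c : EReal) ≤ g x := by
  rcases K.eq_empty_or_nonempty with rfl | hne
  · exact ⟨0, by simp⟩
  obtain ⟨a, -, ha⟩ := (hg.lowerSemicontinuousOn K).exists_isMinOn hne hK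
  obtain ⟨c, -, hc⟩ := EReal.lt_iff_exists_real_btwn.mp (bot_lt_iff_ne_bot.mpr (hg_nbot a))
  exact ⟨c, fun x hx => hc.le.trans (ha hx)⟩

lemma exists_real_le_add_of_eventually_nonneg {α : Type*} [TopologicalSpace α]
    {g : α → EReal} {ψ : α → ℝ} (hg : LowerSemicontinuous g) (hg_nbot : ∀ x, g x ≠ ⊥)
    (hψ : Continuous ψ) (hcocompact : ∀ᶠ x in cocompact α, 0 ≤ g x + ψ x) :
    ∃ c : ℝ, ∀ x, (c : EReal) ≤ g x + ψ x := by
  obtain ⟨K, hK, hKc⟩ := mem_cocompact.mp hcocompact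
  obtain ⟨c₁, hc₁⟩ := hK.exists_real_le_of_lowerSemicontinuous hg hg_nbot
  obtain ⟨c₂, hc₂⟩ := hK.bddBelow_image hψ.continuousOn
  refine ⟨min 0 (c₁ + c₂), fun x => ?_⟩
  by_cases hx : x ∈ K
  · calc ((min 0 (c₁ + c₂) : ℝ) : EReal) ≤ (c₁ : EReal) + (c₂ : ℝ) := by
          exact_mod_cast min_le_right _ _
      _ ≤ g x + ψ x := add_le_add (hc₁ x hx) (by exact_mod_cast hc₂ ⟨x, hx, rfl⟩)
  · exact le_trans (by exact_mod_cast min_le_left _ _) (hKc hx)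

lemma eventually_pos_of_tendsto_div_norm_atTop {E : Type*} [SeminormedAddGroup E]
    {h : E → ℝ} {l : Filter E} (hcoer : Tendsto (fun z => h z / ‖z‖) l atTop) :
    ∀ᶠ z in l, 0 < h z := by
  filter_upwards [hcoer.eventually_gt_atTop 0] with z hz
  rcases div_pos_iff.mp hz with ⟨hpos, -⟩ | ⟨-, hneg⟩
  · exact hpos
  · exact absurd hneg (norm_nonneg z).not_gt

lemma exists_eventually_mul_le_of_bot_lt_liminf_div {α : Type*} {g : α → EReal} {h : α → ℝ}
    {l : Filter α} (hpos : ∀ᶠ z in l, 0 < h z)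
    (hliminf : ⊥ < liminf (fun z => g z / (h z : EReal)) l) :
    ∃ m : ℝ, ∀ᶠ z in l, ((m * h z : ℝ) : EReal) ≤ g z := by
  obtain ⟨m, -, hm⟩ := EReal.lt_iff_exists_real_btwn.mp hliminf
  refine ⟨m, ?_⟩
  filter_upwards [eventually_lt_of_lt_liminf hm, hpos] with z hmz hz
  rw [EReal.coe_mul]
  exact (EReal.le_div_iff_mul_le (by exact_mod_cast hz) (EReal.coe_ne_top _)).mp hmz.le

theorem stmt_4_general {n : ℕ} (g : EuclideanSpace ℝ (Fin n) → EReal)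
    (h : EuclideanSpace ℝ (Fin n) → ℝ)
    (hg_nbot : ∀ x, g x ≠ ⊥)
    (hg_lsc : LowerSemicontinuous g)
    (hh_cont : Continuous h)
    (hcoer : Tendsto (fun z : EuclideanSpace ℝ (Fin n) => h z / ‖z‖)
      (comap (fun z : EuclideanSpace ℝ (Fin n) => ‖z‖) atTop) atTop)
    (hliminf : ⊥ < liminf (fun z => g z / (h z : EReal))
      (comap (fun z : EuclideanSpace ℝ (Fin n) => ‖z‖) atTop)) :
    ∃ r c : ℝ, ∀ x, (c : EReal) ≤ g x + (r * h x : ℝ) := by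
  rw [comap_norm_atTop, Metric.cobounded_eq_cocompact] at hcoer hliminf
  obtain ⟨m, hm⟩ := exists_eventually_mul_le_of_bot_lt_liminf_div
    (eventually_pos_of_tendsto_div_norm_atTop hcoer) hliminf
  refine ⟨-m, exists_real_le_add_of_eventually_nonneg hg_lsc hg_nbot
    (continuous_const.mul hh_cont) (hm.mono fun z hz => ?_)⟩
  calc (0 : EReal) = ((m * h z : ℝ) : EReal) + ((-m * h z : ℝ) : EReal) := by
        rw [← EReal.coe_add]; norm_cast; ring
    _ ≤ g z + ((-m * h z : ℝ) : EReal) := by gcongr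

theorem stmt_4 {n : ℕ} (g : EuclideanSpace ℝ (Fin n) → EReal)
    (h : EuclideanSpace ℝ (Fin n) → ℝ)
    (hg_nbot : ∀ x, g x ≠ ⊥) (hg_proper : ∃ x, g x ≠ ⊤)
    (hg_lsc : LowerSemicontinuous g)
    (hh_cont : Continuous h) (hhconv : ConvexOn ℝ Set.univ h)
    (hcoer : Tendsto (fun z : EuclideanSpace ℝ (Fin n) => h z / ‖z‖)
      (comap (fun z : EuclideanSpace ℝ (Fin n) => ‖z‖) atTop) atTop)
    (hliminf : ⊥ < liminf (fun z => g z / (h z : EReal))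
      (comap (fun z : EuclideanSpace ℝ (Fin n) => ‖z‖) atTop)) :
    ∃ r c : ℝ, ∀ x, (c : EReal) ≤ g x + (r * h x : ℝ) :=
  stmt_4_general g h hg_nbot hg_lsc hh_cont hcoer hliminf
end

section
/- Let h : ℝ^n → ℝ be differentiable and convex, f : ℝ^n → ℝ be differentiable and L-smooth relative to h (i.e., L·h − f is convex), g : ℝ^n → ℝ ∪ {∞} be proper, and 0 < γ < 1/L. Suppose z̄ minimizes over z the function g(z) + ⟨∇f(x), z − x⟩ + (1/γ)·D_h(z,x), where D_h(z,x) = h(z) − h(x) − ⟨∇h(x), z − x⟩. Then f(z̄) + g(z̄) ≤ f(x) + g(x) − ((1 − γL)/γ)·D_h(z̄, x). -/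
open scoped RealInnerProductSpace

/-- Tangent line inequality for a convex differentiable function. -/
lemma tangent_le_aux {n : ℕ} (φ : EuclideanSpace ℝ (Fin n) → ℝ)
    (hφ : Differentiable ℝ φ) (hc : ConvexOn ℝ Set.univ φ)
    (x y : EuclideanSpace ℝ (Fin n)) :
    φ x + ⟪gradient φ x, y - x⟫ ≤ φ y := by
  set ψ : ℝ → ℝ := fun t => φ (x + t • (y - x)) with hψdef
  have hA : ∀ t : ℝ, HasDerivAt (fun t : ℝ => x + t • (y - x)) (y - x) t := by
    intro t
    simpa using ((hasDerivAt_id t).smul_const (y - x)).const_add x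
  have hψ : ∀ t : ℝ,
      HasDerivAt ψ ⟪gradient φ (x + t • (y - x)), y - x⟫ t := by
    intro t
    have h1 : HasFDerivAt φ
        (InnerProductSpace.toDual ℝ _ (gradient φ (x + t • (y - x))))
        (x + t • (y - x)) :=
      hasGradientAt_iff_hasFDerivAt.mp (hφ _).hasGradientAt
    have := h1.comp_hasDerivAt t (hA t)
    exact this
  have hcψ : ConvexOn ℝ Set.univ ψ := by
    constructor
    · exact convex_univ
    · intro a _ b _ p q hp hq hpq
      have key : x + (p * a + q * b) • (y - x)
          = p • (x + a • (y - x)) + q • (x + b • (y - x)) := by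
        rw [smul_add, smul_add, add_add_add_comm, ← add_smul, smul_smul, smul_smul,
          ← add_smul, hpq, one_smul]
      calc ψ (p * a + q * b) = φ (p • (x + a • (y - x)) + q • (x + b • (y - x))) := by
            rw [hψdef]; simp only; rw [key]
        _ ≤ p * φ (x + a • (y - x)) + q * φ (x + b • (y - x)) :=
            hc.2 (Set.mem_univ _) (Set.mem_univ _) hp hq hpq
        _ = p * ψ a + q * ψ b := rfl
  have hslope := hcψ.le_slope_of_hasDerivAt (Set.mem_univ (0 : ℝ))
    (Set.mem_univ (1 : ℝ)) zero_lt_one (hψ 0)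
  have hψ0 : ψ 0 = φ x := by simp [hψdef]
  have hψ1 : ψ 1 = φ y := by simp [hψdef]
  rw [slope_def_field, hψ0, hψ1] at hslope
  simp only [zero_smul, add_zero] at hslope
  have : (φ y - φ x) / (1 - 0) = φ y - φ x := by norm_num
  rw [this] at hslope
  linarith

theorem stmt_5 {n : ℕ} (h f : EuclideanSpace ℝ (Fin n) → ℝ)
    (g : EuclideanSpace ℝ (Fin n) → EReal)
    (L γ : ℝ) (hγ0 : 0 < γ) (hγL : γ < 1 / L)
    (hh : Differentiable ℝ h) (hhconv : ConvexOn ℝ Set.univ h)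
    (hf : Differentiable ℝ f)
    (hrel : ConvexOn ℝ Set.univ (fun x => L * h x - f x))
    (hg_nbot : ∀ x, g x ≠ ⊥) (hg_proper : ∃ x, g x ≠ ⊤)
    (x z' : EuclideanSpace ℝ (Fin n))
    (hmin : ∀ z : EuclideanSpace ℝ (Fin n),
      g z' + ((⟪gradient f x, z' - x⟫ +
          (1 / γ) * (h z' - h x - ⟪gradient h x, z' - x⟫) : ℝ) : EReal) ≤
        g z + ((⟪gradient f x, z - x⟫ +
          (1 / γ) * (h z - h x - ⟪gradient h x, z - x⟫) : ℝ) : EReal)) :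
    (f z' : EReal) + g z' ≤
      (f x : EReal) + g x -
        (((1 - γ * L) / γ) * (h z' - h x - ⟪gradient h x, z' - x⟫) : ℝ) := by
  set D : ℝ := h z' - h x - ⟪gradient h x, z' - x⟫ with hD
  -- D ≥ 0
  have hD0 : 0 ≤ D := by
    have := tangent_le_aux h hh hhconv x z'
    rw [hD]; linarith
  -- gradient of L•h - f
  have hgradφ : gradient (fun x => L * h x - f x) x
      = L • gradient h x - gradient f x := by
    apply HasGradientAt.gradient
    rw [hasGradientAt_iff_hasFDerivAt]
    have h1 : HasFDerivAt h (InnerProductSpace.toDual ℝ _ (gradient h x)) x :=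
      hasGradientAt_iff_hasFDerivAt.mp (hh x).hasGradientAt
    have h2 : HasFDerivAt f (InnerProductSpace.toDual ℝ _ (gradient f x)) x :=
      hasGradientAt_iff_hasFDerivAt.mp (hf x).hasGradientAt
    have h3 := (h1.const_smul L).sub h2
    simp only [map_sub, map_smul]
    exact h3
  -- relative smoothness inequality
  have hsmooth : f z' ≤ f x + ⟪gradient f x, z' - x⟫ + L * D := by
    have := tangent_le_aux (fun x => L * h x - f x)
      (by fun_prop) hrel x z'
    rw [hgradφ] at this
    simp only [inner_sub_left, real_inner_smul_left] at this
    rw [hD]; linarith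
  -- minimality at z = x
  have hmx := hmin x
  have hzero : (⟪gradient f x, x - x⟫ +
      (1 / γ) * (h x - h x - ⟪gradient h x, x - x⟫) : ℝ) = 0 := by
    simp
  rw [hzero] at hmx
  -- case analysis on g z'
  rcases eq_or_ne (g z') ⊤ with hgz | hgz
  · -- g z' = ⊤ forces g x = ⊤
    rw [hgz, EReal.top_add_coe, top_le_iff] at hmx
    have hgx : g x = ⊤ := by
      rcases eq_or_ne (g x) ⊤ with h' | h'
      · exact h'
      · exfalso
        lift g x to ℝ using ⟨h', hg_nbot x⟩ with b
        rw [← EReal.coe_add] at hmx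
        exact EReal.coe_ne_top _ hmx
    rw [hgx]
    have : (f x : EReal) + ⊤ = ⊤ := EReal.coe_add_top _
    rw [this, EReal.top_sub_coe]
    exact le_top
  · lift g z' to ℝ using ⟨hgz, hg_nbot z'⟩ with a hga
    rcases eq_or_ne (g x) ⊤ with hgx | hgx
    · rw [hgx]
      have : (f x : EReal) + ⊤ = ⊤ := EReal.coe_add_top _
      rw [this, EReal.top_sub_coe]
      exact le_top
    · lift g x to ℝ using ⟨hgx, hg_nbot x⟩ with b hgb
      rw [← EReal.coe_add, ← EReal.coe_add, EReal.coe_le_coe_iff] at hmx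
      rw [← EReal.coe_add, ← EReal.coe_add, ← EReal.coe_sub, EReal.coe_le_coe_iff]
      have hγ : γ ≠ 0 := ne_of_gt hγ0
      have hfield : (1 - γ * L) / γ * D = (1 / γ) * D - L * D := by
        field_simp
      rw [hfield]
      have hinner : ⟪gradient f x, z' - x⟫ ≤ b - a - (1 / γ) * D := by linarith
      have h2 : f z' ≤ f x + (b - a - 1 / γ * D) + L * D :=
        le_trans hsmooth (by linarith [hinner])
      linarith [h2]
end

section
/- Let (s_k) be a sequence of nonnegative reals converging to 0, let α > 1 and β > 0, and suppose s_k^α ≤ β·(s_k − s_{k+1}) for all sufficiently large k. Then there exists μ > 0 such that s_k ≤ μ·k^{−1/(α−1)} for all sufficiently large k. -/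
open Filter

private lemma keyA {q t : ℝ} (hq : 0 < q) (ht : 0 < t) (ht1 : t ≤ 1) :
    1 + q * (1 - t) ≤ t ^ (-q) := by
  rcases le_or_gt 1 q with hq1 | hq1
  · have hs : (-1 : ℝ) ≤ 1 / t - 1 := by
      have : 0 < 1 / t := by positivity
      linarith
    have hb := one_add_mul_self_le_rpow_one_add hs hq1
    have he : (1 + (1 / t - 1)) = 1 / t := by ring
    rw [he, one_div, Real.inv_rpow ht.le, ← Real.rpow_neg ht.le] at hb
    have hd : (1 / t - 1) - (1 - t) = (1 - t) ^ 2 / t := by field_simp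
    have hd' : 0 ≤ (1 - t) ^ 2 / t := by positivity
    have h5 : q * (1 - t) ≤ q * (1 / t - 1) :=
      mul_le_mul_of_nonneg_left (by linarith) hq.le
    rw [← one_div] at hb
    linarith
  · have hs : (-1 : ℝ) ≤ t - 1 := by linarith
    have hb := rpow_one_add_le_one_add_mul_self hs hq.le hq1.le
    have he : (1 + (t - 1)) = t := by ring
    rw [he] at hb
    have h2 : 0 < t ^ q := Real.rpow_pos_of_pos ht q
    rw [Real.rpow_neg ht.le, ← one_div, le_div_iff₀ h2]
    nlinarith [sq_nonneg (q * (1 - t))]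

private lemma keyB {q x y : ℝ} (hq : 0 < q) (hy : 0 < y) (hxy : y ≤ x) :
    x ^ (-q) + q * x ^ (-q - 1) * (x - y) ≤ y ^ (-q) := by
  have hx : 0 < x := hy.trans_le hxy
  have hA := keyA hq (div_pos hy hx) ((div_le_one hx).mpr hxy)
  have hApos : 0 < x ^ (-q) := Real.rpow_pos_of_pos hx _
  have hmul := mul_le_mul_of_nonneg_left hA hApos.le
  have e1 : (y / x) ^ (-q) = y ^ (-q) / x ^ (-q) := Real.div_rpow hy.le hx.le _
  have e2 : x ^ (-q - 1) = x ^ (-q) * x⁻¹ := by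
    rw [show -q - 1 = -q + (-1) by ring, Real.rpow_add hx, Real.rpow_neg_one]
  rw [e1] at hmul
  have e3 : x ^ (-q) * (y ^ (-q) / x ^ (-q)) = y ^ (-q) := by field_simp
  rw [e3] at hmul
  calc x ^ (-q) + q * x ^ (-q - 1) * (x - y)
      = x ^ (-q) * (1 + q * (1 - y / x)) := by rw [e2]; field_simp
    _ ≤ y ^ (-q) := hmul

theorem stmt_10 (s : ℕ → ℝ) (α β : ℝ)
    (hs : ∀ k, 0 ≤ s k) (hs0 : Tendsto s atTop (nhds 0))
    (hα : 1 < α) (hβ : 0 < β)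
    (hrec : ∃ N, ∀ k ≥ N, s k ^ α ≤ β * (s k - s (k + 1))) :
    ∃ μ > 0, ∃ N, ∀ k ≥ N, s k ≤ μ * (k : ℝ) ^ (-(1 / (α - 1))) := by
  obtain ⟨N, hN⟩ := hrec
  set q : ℝ := α - 1 with hq_def
  have hq : 0 < q := by simp [hq_def]; linarith
  by_cases hz : ∃ k, N ≤ k ∧ s k = 0
  · -- sequence is eventually 0
    obtain ⟨k0, hk0, hk0z⟩ := hz
    refine ⟨1, one_pos, k0, fun k hk => ?_⟩
    have hzero : ∀ m, s (k0 + m) = 0 := by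
      intro m
      induction m with
      | zero => simpa using hk0z
      | succ m ih =>
        have hrec' := hN (k0 + m) (le_trans hk0 (Nat.le_add_right _ _))
        rw [ih] at hrec'
        have : (0:ℝ) ^ α = 0 := Real.zero_rpow (by linarith)
        rw [this] at hrec'
        have h1 : s (k0 + m + 1) ≤ 0 := by nlinarith
        have h2 := hs (k0 + m + 1)
        exact le_antisymm h1 h2
    have : s k = 0 := by
      have := hzero (k - k0)
      rwa [Nat.add_sub_cancel' hk] at this
    rw [this, one_mul]
    positivity
  · push_neg at hz
    have hpos : ∀ k, N ≤ k → 0 < s k := fun k hk =>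
      lt_of_le_of_ne (hs k) (Ne.symm (hz k hk))
    set c : ℝ := q / β with hc_def
    have hc : 0 < c := by positivity
    -- step inequality
    have hstep : ∀ k, N ≤ k → s k ^ (-q) + c ≤ s (k + 1) ^ (-q) := by
      intro k hk
      have hk1 : 0 < s k := hpos k hk
      have hrec' := hN k hk
      have hskα : 0 < s k ^ α := Real.rpow_pos_of_pos hk1 _
      have hk2 : 0 < s (k + 1) := hpos (k + 1) (le_trans hk (Nat.le_succ _))
      have hle : s (k + 1) ≤ s k := by nlinarith
      have hB := keyB hq hk2 hle
      have hdiff : s k ^ α / β ≤ s k - s (k + 1) := by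
        rw [div_le_iff₀ hβ]; linarith [mul_comm β (s k - s (k+1))]
      have hcoef : 0 ≤ q * s k ^ (-q - 1) := by positivity
      have h3 : q * s k ^ (-q - 1) * (s k ^ α / β) ≤ q * s k ^ (-q - 1) * (s k - s (k + 1)) :=
        mul_le_mul_of_nonneg_left hdiff hcoef
      have hid : s k ^ (-q - 1) * s k ^ α = 1 := by
        rw [← Real.rpow_add hk1]
        have : -q - 1 + α = 0 := by simp only [hq_def]; ring
        rw [this, Real.rpow_zero]
      have h4 : q * s k ^ (-q - 1) * (s k ^ α / β) = c := by
        rw [hc_def]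
        calc q * s k ^ (-q - 1) * (s k ^ α / β)
            = q * (s k ^ (-q - 1) * s k ^ α) / β := by ring
          _ = q / β := by rw [hid, mul_one]
      calc s k ^ (-q) + c = s k ^ (-q) + q * s k ^ (-q - 1) * (s k ^ α / β) := by rw [h4]
        _ ≤ s k ^ (-q) + q * s k ^ (-q - 1) * (s k - s (k + 1)) := by linarith
        _ ≤ s (k + 1) ^ (-q) := hB
    -- accumulate
    have hacc : ∀ m : ℕ, s N ^ (-q) + c * m ≤ s (N + m) ^ (-q) := by
      intro m
      induction m with
      | zero => simp
      | succ m ih =>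
        have h2 : s (N + m) ^ (-q) + c ≤ s (N + (m + 1)) ^ (-q) :=
          hstep (N + m) (Nat.le_add_right _ _)
        push_cast
        push_cast at ih
        linarith
    have hNpos : 0 < s N ^ (-q) := Real.rpow_pos_of_pos (hpos N le_rfl) _
    refine ⟨(c / 2) ^ (-(1 / q)), Real.rpow_pos_of_pos (by positivity) _, 2 * N + 2, fun k hk => ?_⟩
    have hkN : N ≤ k := by omega
    have hkR : (0:ℝ) < (k:ℝ) := by
      have : 1 ≤ k := by omega
      exact_mod_cast Nat.lt_of_lt_of_le Nat.zero_lt_one this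
    have hbound : c / 2 * k ≤ s k ^ (-q) := by
      have hm := hacc (k - N)
      rw [Nat.add_sub_cancel' hkN] at hm
      have hcast : ((k - N : ℕ) : ℝ) = (k : ℝ) - N := by
        push_cast [Nat.cast_sub hkN]; ring
      rw [hcast] at hm
      have hhalf : (k : ℝ) / 2 ≤ (k : ℝ) - N := by
        have : (2 * N : ℕ) ≤ k := by omega
        have : (2 * N : ℝ) ≤ k := by exact_mod_cast this
        linarith
      nlinarith
    have hskpos : 0 < s k := hpos k hkN
    have hckpos : 0 < c / 2 * k := by positivity
    -- s k = (s k ^ (-q)) ^ (-(1/q))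
    have hsk_eq : s k = (s k ^ (-q)) ^ (-(1 / q)) := by
      rw [← Real.rpow_mul (hs k), show -q * -(1 / q) = 1 by field_simp, Real.rpow_one]
    have hmono : (s k ^ (-q)) ^ (-(1 / q)) ≤ (c / 2 * k) ^ (-(1 / q)) :=
      Real.rpow_le_rpow_of_nonpos hckpos hbound (neg_nonpos.mpr (by positivity))
    have hsplit : (c / 2 * k) ^ (-(1 / q)) = (c / 2) ^ (-(1 / q)) * (k : ℝ) ^ (-(1 / q)) :=
      Real.mul_rpow (by positivity) hkR.le
    rw [hsk_eq]
    calc (s k ^ (-q)) ^ (-(1 / q)) ≤ (c / 2 * k) ^ (-(1 / q)) := hmono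
      _ = (c / 2) ^ (-(1 / q)) * (k : ℝ) ^ (-(1 / q)) := hsplit
      _ = (c / 2) ^ (-(1 / q)) * (k : ℝ) ^ (-(1 / (α - 1))) := by rw [hq_def]
end

section
/- Let (s_k) be a sequence of nonnegative reals converging to 0, let 0 < α < 1 and β > 0, and suppose s_k^α ≤ β·(s_k − s_{k+1}) for all k. Then s_k = 0 for all sufficiently large k or, at least, there exist λ > 0 and τ ∈ [0,1) with s_k ≤ λ·τ^k for all k. -/
open Filter

theorem stmt_11 (s : ℕ → ℝ) (α β : ℝ)
    (hs : ∀ k, 0 ≤ s k) (hs0 : Tendsto s atTop (nhds 0))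
    (hα0 : 0 < α) (hα1 : α < 1) (hβ : 0 < β)
    (hrec : ∀ k, s k ^ α ≤ β * (s k - s (k + 1))) :
    (∃ N, ∀ k ≥ N, s k = 0) ∨
      (∃ lam > 0, ∃ τ, 0 ≤ τ ∧ τ < 1 ∧ ∀ k, s k ≤ lam * τ ^ k) := by
  right
  -- s is antitone
  have hanti : Antitone s := by
    apply antitone_nat_of_succ_le
    intro k
    have h1 : 0 ≤ s k ^ α := Real.rpow_nonneg (hs k) α
    have h2 := hrec k
    nlinarith
  -- pick N with s N ≤ 1
  have hev : ∀ᶠ k in atTop, s k < 1 := by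
    have := hs0.eventually (eventually_lt_nhds (by norm_num : (0:ℝ) < 1))
    exact this
  obtain ⟨N, hN⟩ := hev.exists_forall_of_atTop
  have hsN1 : s N ≤ 1 := (hN N le_rfl).le
  -- τ
  set τ : ℝ := max (1 - 1/β) (1/2) with hτdef
  have hτ0 : (0:ℝ) < τ := lt_of_lt_of_le (by norm_num) (le_max_right _ _)
  have hτ1 : τ < 1 := by
    apply max_lt _ (by norm_num)
    have : 0 < 1/β := by positivity
    linarith
  -- key step
  have hstep : ∀ k, s k ≤ 1 → s (k+1) ≤ τ * s k := by
    intro k hk1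
    rcases eq_or_lt_of_le (hs k) with h0 | h0
    · have h2 := hrec k
      rw [← h0] at h2 ⊢
      rw [Real.zero_rpow (ne_of_gt hα0)] at h2
      have : s (k+1) ≤ 0 := by nlinarith
      have := hs (k+1)
      nlinarith [mul_nonneg hτ0.le (le_refl (0:ℝ))]
    · have h1 : s k ^ (1:ℝ) ≤ s k ^ α :=
        Real.rpow_le_rpow_of_exponent_ge h0 hk1 hα1.le
      rw [Real.rpow_one] at h1
      have h2 := hrec k
      have h3 : s k ≤ β * (s k - s (k+1)) := le_trans h1 h2
      have hdiv : s k / β ≤ s k - s (k+1) := by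
        rw [div_le_iff₀ hβ]; nlinarith
      have heq : s k - s k / β = (1 - 1/β) * s k := by ring
      have h5 : (1 - 1/β) * s k ≤ τ * s k :=
        mul_le_mul_of_nonneg_right (le_max_left _ _) (hs k)
      linarith
  -- geometric decay from N
  have hgeo : ∀ k, s (N + k) ≤ τ ^ k := by
    intro k
    induction k with
    | zero => simpa using hsN1
    | succ n ih =>
      have hle1 : s (N + n) ≤ 1 := le_trans ih (pow_le_one₀ hτ0.le hτ1.le)
      have := hstep (N + n) hle1
      calc s (N + (n+1)) = s (N + n + 1) := by ring_nf
      _ ≤ τ * s (N + n) := this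
      _ ≤ τ * τ ^ n := mul_le_mul_of_nonneg_left ih hτ0.le
      _ = τ ^ (n+1) := by ring
  refine ⟨(s 0 + 1) / τ ^ N, by have := hs 0; positivity, τ, hτ0.le, hτ1, ?_⟩
  intro k
  rcases le_or_gt N k with h | h
  · obtain ⟨m, rfl⟩ := Nat.exists_eq_add_of_le h
    calc s (N + m) ≤ τ ^ m := hgeo m
    _ ≤ (s 0 + 1) / τ ^ N * τ ^ (N + m) := by
        have hne : (τ:ℝ) ^ N ≠ 0 := by positivity
        rw [pow_add, show (s 0 + 1) / τ ^ N * (τ ^ N * τ ^ m)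
            = (s 0 + 1) * τ ^ m by field_simp]
        nlinarith [hs 0, pow_pos hτ0 m]
  · have h1 : s k ≤ s 0 := hanti (Nat.zero_le k)
    have h2 : τ ^ N ≤ τ ^ k := pow_le_pow_of_le_one hτ0.le hτ1.le h.le
    have h3 : 0 < τ ^ N := pow_pos hτ0 N
    rw [div_mul_eq_mul_div, le_div_iff₀ h3]
    have h4 := mul_le_mul h1 h2 h3.le (hs 0)
    linarith
end

section
/- Let h : ℝ^{m×r} × ℝ^{r×n} → ℝ be given by h(U,V) = (β₁/2·‖U‖_F² + 1)·(α₂/4·‖V‖_F⁴ + β₂/2·‖V‖_F² + 1) with α₂, β₁, β₂ > 0, and let f(U,V) = ½‖X − UV‖_F² for a fixed matrix X ∈ ℝ^{m×n}. If L₁ ≥ 2/(β₁β₂), then for every fixed V the function U ↦ L₁·h(U,V) − f(U,V) is convex on ℝ^{m×r}. -/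
open Matrix

/-- Squared Frobenius norm. -/
noncomputable def fsq {ι κ : Type*} [Fintype ι] [Fintype κ] (A : Matrix ι κ ℝ) : ℝ :=
  ∑ i, ∑ j, (A i j) ^ 2

/-- Frobenius inner product. -/
noncomputable def ipr {ι κ : Type*} [Fintype ι] [Fintype κ] (A B : Matrix ι κ ℝ) : ℝ :=
  ∑ i, ∑ j, A i j * B i j

lemma fsq_nonneg' {ι κ : Type*} [Fintype ι] [Fintype κ] (A : Matrix ι κ ℝ) : 0 ≤ fsq A := by
  apply Finset.sum_nonneg; intros; apply Finset.sum_nonneg; intros; positivity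

lemma fsq_smul_add' {ι κ : Type*} [Fintype ι] [Fintype κ] (a b : ℝ) (A B : Matrix ι κ ℝ) :
    fsq (a • A + b • B) = a^2 * fsq A + 2*a*b * ipr A B + b^2 * fsq B := by
  simp only [fsq, ipr, Finset.mul_sum, ← Finset.sum_add_distrib]
  refine Finset.sum_congr rfl fun i _ => Finset.sum_congr rfl fun j _ => ?_
  simp only [Matrix.add_apply, Matrix.smul_apply, smul_eq_mul]; ring

lemma fsq_sub' {ι κ : Type*} [Fintype ι] [Fintype κ] (A B : Matrix ι κ ℝ) :
    fsq (A - B) = fsq A - 2 * ipr A B + fsq B := by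
  simp only [fsq, ipr, Finset.mul_sum, ← Finset.sum_sub_distrib, ← Finset.sum_add_distrib]
  refine Finset.sum_congr rfl fun i _ => Finset.sum_congr rfl fun j _ => ?_
  simp only [Matrix.sub_apply]; ring

lemma ipr_smul_add_right' {ι κ : Type*} [Fintype ι] [Fintype κ] (a b : ℝ) (A B C : Matrix ι κ ℝ) :
    ipr A (a • B + b • C) = a * ipr A B + b * ipr A C := by
  simp only [ipr, Finset.mul_sum, ← Finset.sum_add_distrib]
  refine Finset.sum_congr rfl fun i _ => Finset.sum_congr rfl fun j _ => ?_
  simp only [Matrix.add_apply, Matrix.smul_apply, smul_eq_mul]; ring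

lemma fsq_mul_le' {m r n : ℕ} (Z : Matrix (Fin m) (Fin r) ℝ) (V : Matrix (Fin r) (Fin n) ℝ) :
    fsq (Z * V) ≤ fsq Z * fsq V := by
  have h1 : fsq (Z * V) ≤ ∑ i, ∑ j, (∑ k, Z i k ^ 2) * (∑ k, V k j ^ 2) := by
    refine Finset.sum_le_sum fun i _ => Finset.sum_le_sum fun j _ => ?_
    rw [Matrix.mul_apply]
    exact Finset.sum_mul_sq_le_sq_mul_sq _ _ _
  refine h1.trans_eq ?_
  rw [fsq, fsq, Finset.sum_mul]
  refine Finset.sum_congr rfl fun i _ => ?_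
  rw [← Finset.mul_sum, Finset.sum_comm]

theorem stmt_12 {m r n : ℕ} (X : Matrix (Fin m) (Fin n) ℝ)
    (α₂ β₁ β₂ L₁ : ℝ) (hα₂ : 0 < α₂) (hβ₁ : 0 < β₁) (hβ₂ : 0 < β₂)
    (hL₁ : 2 / (β₁ * β₂) ≤ L₁) :
    ∀ V : Matrix (Fin r) (Fin n) ℝ,
      ConvexOn ℝ Set.univ (fun U : Matrix (Fin m) (Fin r) ℝ =>
        L₁ * ((β₁ / 2 * fsq U + 1) * (α₂ / 4 * (fsq V) ^ 2 + β₂ / 2 * fsq V + 1)) -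
          (1 / 2) * fsq (X - U * V)) := by
  intro V
  set s : ℝ := fsq V with hs
  have hs0 : 0 ≤ s := fsq_nonneg' V
  set C : ℝ := α₂ / 4 * s ^ 2 + β₂ / 2 * s + 1 with hC
  -- key quadratic form inequality
  have hq : ∀ Z : Matrix (Fin m) (Fin r) ℝ, fsq (Z * V) ≤ L₁ * β₁ * C * fsq Z := by
    intro Z
    have h1 : fsq (Z * V) ≤ fsq Z * s := fsq_mul_le' Z V
    have h2 : s ≤ L₁ * β₁ * C := by
      have hL : 2 / (β₁ * β₂) * β₁ * (β₂ / 2 * s) ≤ L₁ * β₁ * (β₂ / 2 * s) := by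
        have : 0 ≤ β₁ * (β₂ / 2 * s) := by positivity
        nlinarith [mul_le_mul_of_nonneg_right hL₁ this]
      have heq : 2 / (β₁ * β₂) * β₁ * (β₂ / 2 * s) = s := by
        field_simp
      have hCm : β₂ / 2 * s ≤ C := by
        have : 0 ≤ α₂ / 4 * s ^ 2 := by positivity
        simp only [hC]; linarith
      have hL1pos : 0 ≤ L₁ * β₁ := by
        have h2p : 0 < 2 / (β₁ * β₂) := by positivity
        nlinarith
      calc s = 2 / (β₁ * β₂) * β₁ * (β₂ / 2 * s) := heq.symm
        _ ≤ L₁ * β₁ * (β₂ / 2 * s) := hL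
        _ ≤ L₁ * β₁ * C := by nlinarith
    nlinarith [fsq_nonneg' Z]
  constructor
  · exact convex_univ
  intro x _ y _ a b ha hb hab
  simp only
  have hmul : (a • x + b • y) * V = a • (x * V) + b • (y * V) := by
    rw [Matrix.add_mul, Matrix.smul_mul, Matrix.smul_mul]
  rw [hmul, fsq_smul_add' a b x y]
  have e2 : fsq (X - (a • (x * V) + b • (y * V)))
      = fsq X - 2 * (a * ipr X (x * V) + b * ipr X (y * V))
        + (a^2 * fsq (x * V) + 2*a*b * ipr (x * V) (y * V) + b^2 * fsq (y * V)) := by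
    rw [fsq_sub', ipr_smul_add_right', fsq_smul_add']
  have e3 : fsq (X - x * V) = fsq X - 2 * ipr X (x * V) + fsq (x * V) := fsq_sub' _ _
  have e4 : fsq (X - y * V) = fsq X - 2 * ipr X (y * V) + fsq (y * V) := fsq_sub' _ _
  have hqxy := hq (x - y)
  have hxy1 : fsq (x - y) = fsq x - 2 * ipr x y + fsq y := fsq_sub' _ _
  have hxy2 : (x - y) * V = x * V - y * V := Matrix.sub_mul _ _ _
  have hxy3 : fsq (x * V - y * V) = fsq (x * V) - 2 * ipr (x * V) (y * V) + fsq (y * V) :=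
    fsq_sub' _ _
  rw [hxy2, hxy3, hxy1] at hqxy
  simp only [smul_eq_mul]
  rw [e2, e3, e4]
  have key : 0 ≤ a * b * (L₁ * β₁ * C * (fsq x - 2 * ipr x y + fsq y)
      - (fsq (x * V) - 2 * ipr (x * V) (y * V) + fsq (y * V))) :=
    mul_nonneg (mul_nonneg ha hb) (by linarith)
  have hb' : b = 1 - a := by linarith
  subst hb'
  clear_value s C
  linarith [key]
end

section
/- Let φ : ℝ^n → ℝ be differentiable, bounded below, satisfying the Łojasiewicz inequality with exponent θ ∈ (0, 1/2] at level value φ* : |φ(x) − φ*|^θ ≤ κ·‖∇φ(x)‖ for all x in a ball B(x*, ε). Suppose a sequence (x^k) in B(x*, ε) satisfies: (i) φ(x^k) − φ(x^{k+1}) ≥ ĉ·‖∇φ(x^k)‖² for some ĉ > 0 and all k, and (ii) φ(x^k) → φ* with φ(x^k) > φ* for all k. Then S_k := φ(x^k) − φ* converges linearly to 0: there exist μ > 0 and τ ∈ [0,1) such that S_k ≤ μ·τ^k. -/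
open Filter Metric

theorem stmt_19 {n : ℕ} (φ : EuclideanSpace ℝ (Fin n) → ℝ)
    (xstar : EuclideanSpace ℝ (Fin n)) (φstar κ ε θ chat : ℝ)
    (hφ : Differentiable ℝ φ) (hbdd : ∃ c : ℝ, ∀ x, c ≤ φ x)
    (hθ0 : 0 < θ) (hθ : θ ≤ 1 / 2) (hκ : 0 < κ) (hε : 0 < ε) (hc : 0 < chat)
    (hKL : ∀ x ∈ ball xstar ε, |φ x - φstar| ^ θ ≤ κ * ‖gradient φ x‖)
    (x : ℕ → EuclideanSpace ℝ (Fin n))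
    (hxball : ∀ k, x k ∈ ball xstar ε)
    (hdec : ∀ k, chat * ‖gradient φ (x k)‖ ^ 2 ≤ φ (x k) - φ (x (k + 1)))
    (hconv : Tendsto (fun k => φ (x k)) atTop (nhds φstar))
    (hgt : ∀ k, φstar < φ (x k)) :
    ∃ μ > 0, ∃ τ, 0 ≤ τ ∧ τ < 1 ∧ ∀ k, φ (x k) - φstar ≤ μ * τ ^ k := by
  set S : ℕ → ℝ := fun k => φ (x k) - φstar with hSdef
  have hSpos : ∀ k, 0 < S k := fun k => sub_pos.mpr (hgt k)
  -- S decreasing step by step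
  have hmono : ∀ k, S (k + 1) ≤ S k := by
    intro k
    have h1 := hdec k
    have h2 : 0 ≤ chat * ‖gradient φ (x k)‖ ^ 2 :=
      mul_nonneg hc.le (sq_nonneg _)
    simp only [hSdef]; linarith
  have hSle : ∀ k, S k ≤ S 0 := by
    intro k
    induction k with
    | zero => exact le_rfl
    | succ m ih => exact le_trans (hmono m) ih
  -- key inequality: S k - S (k+1) ≥ (chat/κ^2) * S k ^ (2θ)
  have hkey : ∀ k, chat / κ ^ 2 * S k ^ (2 * θ) ≤ S k - S (k + 1) := by
    intro k
    have hKLk := hKL (x k) (hxball k)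
    rw [abs_of_pos (hSpos k)] at hKLk
    have hpow : S k ^ (2 * θ) ≤ κ ^ 2 * ‖gradient φ (x k)‖ ^ 2 := by
      have h1 : (S k ^ θ) ^ 2 ≤ (κ * ‖gradient φ (x k)‖) ^ 2 := by
        apply pow_le_pow_left₀ (Real.rpow_nonneg (hSpos k).le θ) hKLk
      calc S k ^ (2 * θ) = (S k ^ θ) ^ 2 := by
            rw [← Real.rpow_natCast (S k ^ θ) 2, ← Real.rpow_mul (hSpos k).le]
            norm_num [mul_comm]
        _ ≤ (κ * ‖gradient φ (x k)‖) ^ 2 := h1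
        _ = κ ^ 2 * ‖gradient φ (x k)‖ ^ 2 := by ring
    have h2 : chat / κ ^ 2 * S k ^ (2 * θ) ≤ chat * ‖gradient φ (x k)‖ ^ 2 := by
      rw [div_mul_eq_mul_div, div_le_iff₀ (by positivity)]
      calc chat * S k ^ (2 * θ) ≤ chat * (κ ^ 2 * ‖gradient φ (x k)‖ ^ 2) := by
            exact mul_le_mul_of_nonneg_left hpow hc.le
        _ = chat * ‖gradient φ (x k)‖ ^ 2 * κ ^ 2 := by ring
    have := hdec k
    simp only [hSdef]
    linarith
  -- since 2θ - 1 ≤ 0 and S k ≤ S 0:  S k ^ (2θ) ≥ S k * S 0 ^ (2θ - 1)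
  set c' : ℝ := chat / κ ^ 2 * S 0 ^ (2 * θ - 1) with hc'def
  have hc'pos : 0 < c' := by
    apply mul_pos (by positivity)
    exact Real.rpow_pos_of_pos (hSpos 0) _
  have hstep : ∀ k, S (k + 1) ≤ (1 - c') * S k := by
    intro k
    have h1 : S 0 ^ (2 * θ - 1) ≤ S k ^ (2 * θ - 1) :=
      Real.rpow_le_rpow_of_nonpos (hSpos k) (hSle k) (by linarith)
    have h2 : S k * S 0 ^ (2 * θ - 1) ≤ S k ^ (2 * θ) := by
      calc S k * S 0 ^ (2 * θ - 1) ≤ S k * S k ^ (2 * θ - 1) :=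
            mul_le_mul_of_nonneg_left h1 (hSpos k).le
        _ = S k ^ (1 : ℝ) * S k ^ (2 * θ - 1) := by rw [Real.rpow_one]
        _ = S k ^ (2 * θ) := by
            rw [← Real.rpow_add (hSpos k)]; ring_nf
    have h3 : c' * S k ≤ chat / κ ^ 2 * S k ^ (2 * θ) := by
      rw [hc'def]
      calc chat / κ ^ 2 * S 0 ^ (2 * θ - 1) * S k
          = chat / κ ^ 2 * (S k * S 0 ^ (2 * θ - 1)) := by ring
        _ ≤ chat / κ ^ 2 * S k ^ (2 * θ) :=
            mul_le_mul_of_nonneg_left h2 (by positivity)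
    have h4 := le_trans h3 (hkey k)
    linarith
  have hτlt : 1 - c' < 1 := by linarith
  have hτnonneg : 0 ≤ 1 - c' := by
    by_contra h
    push_neg at h
    have h1 := hstep 0
    have h2 : (1 - c') * S 0 < 0 := mul_neg_of_neg_of_pos h (hSpos 0)
    linarith [hSpos 1]
  refine ⟨S 0, hSpos 0, 1 - c', hτnonneg, hτlt, ?_⟩
  intro k
  induction k with
  | zero => simp [hSdef]
  | succ m ih =>
    calc S (m + 1) ≤ (1 - c') * S m := hstep m
      _ ≤ (1 - c') * (S 0 * (1 - c') ^ m) :=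
          mul_le_mul_of_nonneg_left ih hτnonneg
      _ = S 0 * (1 - c') ^ (m + 1) := by ring
end
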